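/- For any f ∈ 𝒱^+ and any g ∈ D^{−1}𝒱^−, the scalar function 𝒮(f,g) is a polynomial in z_1,…,z_n,h that is symmetric in z_1,…,z_n; that is, 𝒮(f,g) ∈ ℂ[z_1,…,z_n]^{S_n} ⊗ ℂ[h]. -/

import Mathlib

open scoped BigOperators

noncomputable section

namespace GRTV

/-- The field `ℂ(z_1,…,z_n,h)` of rational functions. -/
abbrev K (n : ℕ) : Type := FractionRing (MvPolynomial (Fin n ⊕ Unit) ℂ)

/-- The variable `z_i`. -/
def z {n : ℕ} (i : Fin n) : K n :=
  algebraMap (MvPolynomial (Fin n ⊕ Unit) ℂ) (K n) (MvPolynomial.X (Sum.inl i))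

/-- The variable `h`. -/
def hvar {n : ℕ} : K n :=
  algebraMap (MvPolynomial (Fin n ⊕ Unit) ℂ) (K n) (MvPolynomial.X (Sum.inr ()))

/-- The field automorphism of `ℂ(z_1,…,z_n,h)` permuting the variables `z_i` by `σ`
(and fixing `h`); `f ↦ f^σ`. -/
def permK {n : ℕ} (σ : Equiv.Perm (Fin n)) : K n ≃+* K n :=
  IsFractionRing.ringEquivOfRingEquiv
    (MvPolynomial.renameEquiv ℂ (Equiv.sumCongr σ (Equiv.refl Unit))).toRingEquiv

/-- `V ⊗ ℂ(z_1,…,z_n,h)` in coordinates: a vector is the family of its coordinates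
in the basis `{v_I}`, where a basis index (a decomposition `I`) is recorded as the word
`m : Fin n → Fin N` with `I_j = m⁻¹(j)`. -/
abbrev VV (n N : ℕ) : Type := (Fin n → Fin N) → K n

/-- `h` for the `+` case (`ε = true`) and `-h` for the `−` case (`ε = false`). -/
def sign' {n : ℕ} (ε : Bool) : K n := if ε then hvar else -hvar

def fin1 {n : ℕ} (i : ℕ) (hi : i + 1 < n) : Fin n := ⟨i, Nat.lt_of_succ_lt hi⟩
def fin2 {n : ℕ} (i : ℕ) (hi : i + 1 < n) : Fin n := ⟨i + 1, hi⟩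

/-- The operator `s_i^±` (`ε = true` for `+`, `ε = false` for `−`):
`s_i^± f = ((z_i−z_{i+1})P^{(i,i+1)} ∓ h)/(z_i−z_{i+1}) · f^{s_i} ± h/(z_i−z_{i+1}) · f`.
Here `P^{(i,i+1)}` acts on coordinates by precomposing the word with the transposition,
and `f^{s_i}` applies `permK` coordinatewise. -/
def sOp {n N : ℕ} (ε : Bool) (i : ℕ) (hi : i + 1 < n) (f : VV n N) : VV n N :=
  fun m =>
    ((z (fin1 i hi) - z (fin2 i hi)) *
          permK (Equiv.swap (fin1 i hi) (fin2 i hi))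
            (f (m ∘ ⇑(Equiv.swap (fin1 i hi) (fin2 i hi))))
        - sign' ε * permK (Equiv.swap (fin1 i hi) (fin2 i hi)) (f m))
      / (z (fin1 i hi) - z (fin2 i hi))
    + sign' ε / (z (fin1 i hi) - z (fin2 i hi)) * f m

/-- The block `I_a = {k : m k = a}` of the decomposition encoded by the word `m`. -/
def fib {n N : ℕ} (m : Fin n → Fin N) (a : Fin N) : Finset (Fin n) :=
  Finset.univ.filter (fun k => m k = a)

/-- `I ∈ ℐ_λ`, i.e. `|I_a| = λ_a` for all `a`. -/
def memI {n N : ℕ} (lam : Fin N → ℕ) (m : Fin n → Fin N) : Prop :=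
  ∀ a : Fin N, (fib m a).card = lam a

/-- The order on subsets of `{1,…,n}` of equal cardinality:
`A ≤ B` iff `a_j ≤ b_j` for all `j`, where `A = {a_1<⋯<a_m}`, `B = {b_1<⋯<b_m}`. -/
def subLE {n : ℕ} (A B : Finset (Fin n)) : Prop :=
  ∃ h : A.card = B.card,
    ∀ j : Fin A.card, (↑(A.orderIsoOfFin rfl j) : Fin n) ≤ ↑(B.orderIsoOfFin h.symm j)

/-- The strict order `I < J` on decompositions: `I_k = J_k` for `k < l` and `I_l < J_l`. -/
def decLT {n N : ℕ} (mI mJ : Fin n → Fin N) : Prop :=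
  ∃ l : Fin N, (∀ k : Fin N, k < l → fib mI k = fib mJ k) ∧
    subLE (fib mI l) (fib mJ l) ∧ fib mI l ≠ fib mJ l

/-- `I ≤ J` on decompositions. -/
def decLE {n N : ℕ} (mI mJ : Fin n → Fin N) : Prop :=
  decLT mI mJ ∨ mI = mJ

/-- `Q(z_I) = ∏_{1≤a<b≤N} ∏_{i∈I_a} ∏_{j∈I_b} (z_i−z_j+h)`. -/
def Qz {n N : ℕ} (m : Fin n → Fin N) : K n :=
  ∏ p ∈ Finset.univ.filter (fun p : Fin n × Fin n => m p.1 < m p.2),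
    (z p.1 - z p.2 + hvar)

/-- `R(z_I) = ∏_{1≤a<b≤N} ∏_{i∈I_a} ∏_{j∈I_b} (z_i−z_j)`. -/
def Rz {n N : ℕ} (m : Fin n → Fin N) : K n :=
  ∏ p ∈ Finset.univ.filter (fun p : Fin n × Fin n => m p.1 < m p.2),
    (z p.1 - z p.2)

/-- The basis vector `v_I` corresponding to the word `m0`. -/
def bas {n N : ℕ} (m0 : Fin n → Fin N) : VV n N :=
  fun m => if m = m0 then 1 else 0

/-- `D = ∏_{1≤i<j≤n}(z_i−z_j+h)`. -/
def Dpoly (n : ℕ) : K n :=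
  ∏ p ∈ Finset.univ.filter (fun p : Fin n × Fin n => p.1 < p.2), (z p.1 - z p.2 + hvar)

/-- `Ď = ∏_{1≤i<j≤n}(z_j−z_i+h)`. -/
def Dcheck (n : ℕ) : K n :=
  ∏ p ∈ Finset.univ.filter (fun p : Fin n × Fin n => p.1 < p.2), (z p.2 - z p.1 + hvar)

/-- `f ∈ V ⊗ ℂ[z_1,…,z_n,h]`: all coordinates of `f` are polynomials. -/
def polyVec {n N : ℕ} (f : VV n N) : Prop :=
  ∀ m : Fin n → Fin N, ∃ p : MvPolynomial (Fin n ⊕ Unit) ℂ,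
    f m = algebraMap (MvPolynomial (Fin n ⊕ Unit) ℂ) (K n) p

end GRTV

/-!
Write `S = 𝒮(f, g)`. Pairing the relation `s_i^+ f = f` with `g`, and applying `s_i` to the
relation `s_i^- g = g` paired with `f`, and adding, gives `(z_i - z_{i+1} - h) (S - S^{s_i}) = 0`;
so `S` is invariant under adjacent transpositions, hence symmetric. Then `S D` is a polynomial,
and by symmetry so is `S D^{w₀}`, where `w₀` reverses `z_1, …, z_n`. The factors `z_i - z_j + h`
(`i < j`) of `D` and those of `D^{w₀}` (`i > j`) are pairwise non-associate primes, so `D` and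
`D^{w₀}` are coprime in the factorial ring `ℂ[z, h]`, which forces `S` to be a polynomial.
-/

theorem IsFractionRing.exists_algebraMap_eq_of_isRelPrime {R K : Type*} [CommRing R]
    [DecompositionMonoid R] [Field K] [Algebra R K] [IsFractionRing R K] {x : K} {a b p q : R}
    (hab : IsRelPrime a b) (ha : a ≠ 0) (hp : x * algebraMap R K a = algebraMap R K p)
    (hq : x * algebraMap R K b = algebraMap R K q) : ∃ r, x = algebraMap R K r := by
  have hpb : p * b = q * a := IsFractionRing.injective R K (by
    rw [map_mul, map_mul, ← hp, ← hq]; ring)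
  obtain ⟨r, rfl⟩ := hab.dvd_of_dvd_mul_right (hpb ▸ dvd_mul_left a q)
  have ha' : algebraMap R K a ≠ 0 := (map_ne_zero_iff _ (IsFractionRing.injective R K)).mpr ha
  exact ⟨r, mul_right_cancel₀ ha' (by rw [hp, map_mul, mul_comm])⟩

namespace GRTV

open MvPolynomial

variable {n N : ℕ}

lemma permK_algebraMap (σ : Equiv.Perm (Fin n)) (a : MvPolynomial (Fin n ⊕ Unit) ℂ) :
    permK σ (algebraMap _ (K n) a) =
      algebraMap _ (K n) (rename (Equiv.sumCongr σ (Equiv.refl Unit)) a) :=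
  IsFractionRing.ringEquivOfRingEquiv_algebraMap _ a

lemma permK_one (x : K n) : permK (1 : Equiv.Perm (Fin n)) x = x := by
  suffices h : (permK (1 : Equiv.Perm (Fin n)) : K n →+* K n) = RingHom.id (K n) by
    exact DFunLike.congr_fun h x
  refine IsLocalization.ringHom_ext (nonZeroDivisors (MvPolynomial (Fin n ⊕ Unit) ℂ))
    (RingHom.ext fun a => ?_)
  simp only [RingHom.comp_apply, RingHom.coe_coe, RingHom.id_apply, permK_algebraMap]
  congr 1
  convert rename_id_apply a
  ext (i | i) <;> rfl

lemma permK_mul (σ τ : Equiv.Perm (Fin n)) (x : K n) :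
    permK (σ * τ) x = permK σ (permK τ x) := by
  suffices h : (permK (σ * τ) : K n →+* K n) = (permK σ : K n →+* K n).comp (permK τ) by
    exact DFunLike.congr_fun h x
  refine IsLocalization.ringHom_ext (nonZeroDivisors (MvPolynomial (Fin n ⊕ Unit) ℂ))
    (RingHom.ext fun a => ?_)
  simp only [RingHom.comp_apply, RingHom.coe_coe, permK_algebraMap, rename_rename]
  congr 3
  funext i
  cases i <;> rfl

lemma permK_swap_permK_swap (a b : Fin n) (x : K n) :
    permK (Equiv.swap a b) (permK (Equiv.swap a b) x) = x := by
  rw [← permK_mul, Equiv.swap_mul_self, permK_one]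

lemma permK_z (σ : Equiv.Perm (Fin n)) (i : Fin n) : permK σ (z i) = z (σ i) := by
  simp [z, permK_algebraMap]

lemma permK_hvar (σ : Equiv.Perm (Fin n)) : permK σ (hvar : K n) = hvar := by
  simp [hvar, permK_algebraMap]

lemma permK_eq_self_of_forall_adjacent {x : K n}
    (hx : ∀ (i : ℕ) (hi : i + 1 < n), permK (Equiv.swap (fin1 i hi) (fin2 i hi)) x = x)
    (σ : Equiv.Perm (Fin n)) : permK σ x = x := by
  cases n with
  | zero => rw [Subsingleton.elim σ 1, permK_one]
  | succ n =>
    have hσ : σ ∈ Submonoid.closure (Set.range fun i : Fin n => Equiv.swap i.castSucc i.succ) := by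
      rw [Equiv.Perm.mclosure_swap_castSucc_succ n]; trivial
    induction hσ using Submonoid.closure_induction with
    | mem _ hτ =>
      obtain ⟨i, rfl⟩ := hτ
      exact hx i (by omega)
    | one => exact permK_one x
    | mul _ _ _ _ hτ hτ' => rw [permK_mul, hτ', hτ]

def linForm (i j : Fin n) : MvPolynomial (Fin n ⊕ Unit) ℂ :=
  X (Sum.inl i) - X (Sum.inl j) + X (Sum.inr ())

def toPolyH (n : ℕ) : MvPolynomial (Fin n ⊕ Unit) ℂ ≃+* Polynomial (MvPolynomial (Fin n) ℂ) :=
  ((renameEquiv ℂ (Equiv.optionEquivSumPUnit (Fin n)).symm).trans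
    (optionEquivLeft ℂ (Fin n))).toRingEquiv

lemma toPolyH_linForm (i j : Fin n) :
    toPolyH n (linForm i j) = Polynomial.X - Polynomial.C (X j - X i) := by
  simp [toPolyH, linForm, optionEquivLeft_X_some, optionEquivLeft_X_none]
  ring

lemma linForm_prime (i j : Fin n) : Prime (linForm i j) := by
  rw [← MulEquiv.prime_iff (toPolyH n).toMulEquiv]
  exact toPolyH_linForm i j ▸ Polynomial.prime_X_sub_C _

lemma eq_of_linForm_dvd {i j k l : Fin n} (hij : i ≠ j) (h : linForm i j ∣ linForm k l) :
    i = k ∧ j = l := by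
  rw [← map_dvd_iff (toPolyH n), toPolyH_linForm, toPolyH_linForm, Polynomial.dvd_iff_isRoot,
    Polynomial.root_X_sub_C] at h
  have hi := congrArg (eval (Pi.single i 1)) h
  have hj := congrArg (eval (Pi.single j 1)) h
  simp [Pi.single_apply, hij, hij.symm] at hi hj
  split_ifs at hi hj <;> grind

lemma algebraMap_linForm (i j : Fin n) :
    algebraMap _ (K n) (linForm i j) = z i - z j + hvar := by
  simp [linForm, z, hvar]

lemma rename_linForm (σ : Equiv.Perm (Fin n)) (i j : Fin n) :
    rename (Equiv.sumCongr σ (Equiv.refl Unit)) (linForm i j) = linForm (σ i) (σ j) := by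
  simp [linForm]

def dPoly (n : ℕ) : MvPolynomial (Fin n ⊕ Unit) ℂ :=
  ∏ p ∈ Finset.univ.filter (fun p : Fin n × Fin n => p.1 < p.2), linForm p.1 p.2

lemma algebraMap_dPoly : algebraMap _ (K n) (dPoly n) = Dpoly n := by
  simp [dPoly, Dpoly, algebraMap_linForm]

lemma dPoly_ne_zero : dPoly n ≠ 0 :=
  Finset.prod_ne_zero_iff.mpr fun p _ => (linForm_prime p.1 p.2).ne_zero

lemma Dpoly_ne_zero : Dpoly n ≠ 0 :=
  algebraMap_dPoly (n := n) ▸ (map_ne_zero_iff _ (IsFractionRing.injective _ _)).mpr dPoly_ne_zero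

lemma isRelPrime_dPoly_rename_rev :
    IsRelPrime (dPoly n) (rename (Equiv.sumCongr Fin.revPerm (Equiv.refl Unit)) (dPoly n)) := by
  simp only [dPoly, map_prod, rename_linForm]
  refine IsRelPrime.prod_left fun p hp => IsRelPrime.prod_right fun q hq => ?_
  simp only [Finset.mem_filter, Finset.mem_univ, true_and] at hp hq
  refine (linForm_prime _ _).irreducible.isRelPrime_iff_not_dvd.mpr fun h => ?_
  obtain ⟨h1, h2⟩ := eq_of_linForm_dvd hp.ne h
  simp only [Fin.revPerm_apply] at h1 h2
  exact absurd (h1 ▸ h2 ▸ hp) (not_lt.mpr (Fin.rev_le_rev.mpr hq.le))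

lemma comp_swap_dotProduct (a b : Fin n) (u v : VV n N) :
    (u ∘ (· ∘ ⇑(Equiv.swap a b))) ⬝ᵥ v = u ⬝ᵥ (v ∘ (· ∘ ⇑(Equiv.swap a b))) := by
  have hinv : Function.Involutive (· ∘ ⇑(Equiv.swap a b) : (Fin n → Fin N) → Fin n → Fin N) :=
    fun m => by ext; simp
  exact comp_equiv_symm_dotProduct u v hinv.toPerm

lemma permK_swap_dotProduct_eq_self (a b : Fin n) {f g : VV n N}
    (hf : (z a - z b) • f =
      (z a - z b) • (permK (Equiv.swap a b) ∘ f ∘ (· ∘ ⇑(Equiv.swap a b)))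
        - (hvar : K n) • (permK (Equiv.swap a b) ∘ f) + (hvar : K n) • f)
    (hg : (z a - z b) • g =
      (z a - z b) • (permK (Equiv.swap a b) ∘ g ∘ (· ∘ ⇑(Equiv.swap a b)))
        + (hvar : K n) • (permK (Equiv.swap a b) ∘ g) - (hvar : K n) • g) :
    permK (Equiv.swap a b) (f ⬝ᵥ g) = f ⬝ᵥ g := by
  set s := Equiv.swap a b
  have hmap : ∀ u v : VV n N, permK s (u ⬝ᵥ v) = (permK s ∘ u) ⬝ᵥ (permK s ∘ v) :=
    RingHom.map_dotProduct (permK s : K n →+* K n)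
  have hss : ∀ v : VV n N, permK s ∘ (permK s ∘ v) = v :=
    fun v => funext fun m => permK_swap_permK_swap a b (v m)
  have hα : permK s (z a - z b) = -(z a - z b) := by
    rw [map_sub, permK_z, permK_z, Equiv.swap_apply_left, Equiv.swap_apply_right, neg_sub]
  have hne : z a - z b - hvar ≠ 0 := by
    rw [show z a - z b - hvar = -(z b - z a + hvar) by ring, ← algebraMap_linForm, neg_ne_zero]
    exact (map_ne_zero_iff _ (IsFractionRing.injective _ _)).mpr (linForm_prime b a).ne_zero
  have h1 : permK s (f ⬝ᵥ (permK s ∘ g ∘ (· ∘ ⇑s))) = (permK s ∘ f ∘ (· ∘ ⇑s)) ⬝ᵥ g := by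
    rw [hmap, hss, ← comp_swap_dotProduct]
    rfl
  have h2 : permK s (f ⬝ᵥ (permK s ∘ g)) = (permK s ∘ f) ⬝ᵥ g := by
    rw [hmap, hss]
  have ef := congrArg (· ⬝ᵥ g) hf
  have eg := congrArg (fun v => permK s (f ⬝ᵥ v)) hg
  simp only [add_dotProduct, sub_dotProduct, smul_dotProduct, smul_eq_mul] at ef
  simp only [dotProduct_add, dotProduct_sub, dotProduct_smul, smul_eq_mul, map_add, map_sub,
    map_mul, hα, permK_hvar, h1, h2] at eg
  have key : (z a - z b - hvar) * (f ⬝ᵥ g - permK s (f ⬝ᵥ g)) = 0 := by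
    linear_combination ef + eg
  exact (sub_eq_zero.mp ((mul_eq_zero.mp key).resolve_left hne)).symm

lemma smul_eq_of_sOp_eq_self {ε : Bool} {i : ℕ} {hi : i + 1 < n} {f : VV n N}
    (hf : sOp ε i hi f = f) :
    (z (fin1 i hi) - z (fin2 i hi)) • f =
      (z (fin1 i hi) - z (fin2 i hi)) • (permK (Equiv.swap (fin1 i hi) (fin2 i hi)) ∘ f ∘
          (· ∘ ⇑(Equiv.swap (fin1 i hi) (fin2 i hi))))
        - (sign' ε : K n) • (permK (Equiv.swap (fin1 i hi) (fin2 i hi)) ∘ f)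
        + (sign' ε : K n) • f := by
  have hne : fin1 i hi ≠ fin2 i hi := by simp [fin1, fin2, Fin.ext_iff]
  have hα : z (fin1 i hi) - z (fin2 i hi) ≠ 0 := by
    rw [z, z, ← map_sub]
    exact (map_ne_zero_iff _ (IsFractionRing.injective _ _)).mpr
      (sub_ne_zero.mpr (MvPolynomial.X_injective.ne (Sum.inl_injective.ne hne)))
  funext m
  have hm := congrFun hf m
  simp only [sOp] at hm
  simp only [Pi.add_apply, Pi.sub_apply, Pi.smul_apply, smul_eq_mul, Function.comp_apply]
  field_simp at hm
  linear_combination -hm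

lemma permK_swap_dotProduct_of_sOp {i : ℕ} {hi : i + 1 < n} {f g : VV n N}
    (hf : sOp true i hi f = f) (hg : sOp false i hi g = g) :
    permK (Equiv.swap (fin1 i hi) (fin2 i hi)) (f ⬝ᵥ g) = f ⬝ᵥ g := by
  refine permK_swap_dotProduct_eq_self _ _ ?_ ?_
  · simpa [sign'] using smul_eq_of_sOp_eq_self hf
  · simpa [sign', sub_eq_add_neg, add_comm] using smul_eq_of_sOp_eq_self hg

lemma polyVec.exists_dotProduct_eq {f g : VV n N} (hf : polyVec f) (hg : polyVec g) :
    ∃ p : MvPolynomial (Fin n ⊕ Unit) ℂ, f ⬝ᵥ g = algebraMap _ (K n) p := by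
  choose pf hpf using hf
  choose pg hpg using hg
  exact ⟨∑ m, pf m * pg m, by simp [dotProduct, hpf, hpg]⟩

/-- for `f ∈ 𝒱^+` (an `S_n^+`-invariant element of `V ⊗ ℂ[z,h]`) and
`g ∈ D⁻¹𝒱^−` (an `S_n^−`-invariant function of the form `D⁻¹ g₀` with
`g₀ ∈ V ⊗ ℂ[z,h]`), the Shapovalov pairing `𝒮(f,g) = Σ_m f_m g_m` is a polynomial
in `z_1,…,z_n,h` symmetric in `z_1,…,z_n`. -/
theorem statement9 (n N : ℕ) (f g g0 : VV n N)
    (hfpoly : polyVec f)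
    (hfinv : ∀ (i : ℕ) (hi : i + 1 < n), sOp true i hi f = f)
    (hg0 : polyVec g0)
    (hgD : g = fun m => (Dpoly n)⁻¹ * g0 m)
    (hginv : ∀ (i : ℕ) (hi : i + 1 < n), sOp false i hi g = g) :
    ∃ p : MvPolynomial (Fin n ⊕ Unit) ℂ,
      (∑ m : Fin n → Fin N, f m * g m) =
        algebraMap (MvPolynomial (Fin n ⊕ Unit) ℂ) (K n) p ∧
      ∀ σ : Equiv.Perm (Fin n),
        MvPolynomial.rename (⇑(Equiv.sumCongr σ (Equiv.refl Unit))) p = p := by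
  have hsymm : ∀ σ, permK σ (f ⬝ᵥ g) = f ⬝ᵥ g := permK_eq_self_of_forall_adjacent
    fun i hi => permK_swap_dotProduct_of_sOp (hfinv i hi) (hginv i hi)
  obtain ⟨P, hP⟩ := hfpoly.exists_dotProduct_eq hg0
  have hPD : f ⬝ᵥ g * algebraMap _ (K n) (dPoly n) = algebraMap _ (K n) P := by
    rw [← hP, algebraMap_dPoly, hgD]
    change f ⬝ᵥ ((Dpoly n)⁻¹ • g0) * _ = _
    rw [dotProduct_smul, smul_eq_mul, mul_comm, mul_inv_cancel_left₀ Dpoly_ne_zero]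
  set rev := rename (R := ℂ) (Equiv.sumCongr (Fin.revPerm (n := n)) (Equiv.refl Unit))
  have hPD' : f ⬝ᵥ g * algebraMap _ (K n) (rev (dPoly n)) = algebraMap _ (K n) (rev P) := by
    rw [← permK_algebraMap, ← permK_algebraMap, ← hPD, map_mul, hsymm]
  obtain ⟨p, hp⟩ := IsFractionRing.exists_algebraMap_eq_of_isRelPrime
    isRelPrime_dPoly_rename_rev dPoly_ne_zero hPD hPD'
  refine ⟨p, hp, fun σ => IsFractionRing.injective _ (K n) ?_⟩
  rw [← permK_algebraMap, ← hp, hsymm]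

end GRTV
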